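/- Every subdivision of a wheel with an r-explicit generating set contains, as a subgraph, a subdivision of a wheel that is r-bounded. -/

import Mathlib

/-!
Common definitions: weighted graphs, weighted lengths of walks, 𝔽₂-generation of cycles,
subdivisions of wheels (with pieces and rim), theta graphs, the classes 𝒲 and 𝒲*,
fans and pre-fans, arcs/bridges/detours of a cycle relative to a theta graph.
-/

open SimpleGraph

namespace LocalWheels

variable {V : Type*} [Fintype V] [DecidableEq V]

/-- The weighted length of a walk: the sum of the weights of its edges. -/
def wlen {G : SimpleGraph V} (wt : Sym2 V → ℕ) {u v : V} (p : G.Walk u v) : ℕ :=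
  (p.edges.map wt).sum

/-- All edges of `G` have positive weight. -/
def WeightPos (G : SimpleGraph V) (wt : Sym2 V → ℕ) : Prop :=
  ∀ e ∈ G.edgeSet, 0 < wt e

/-- `t` is the 𝔽₂-sum (iterated symmetric difference) of finitely many members of `𝒞`. -/
def IsF2Sum (𝒞 : Set (Finset (Sym2 V))) (t : Finset (Sym2 V)) : Prop :=
  ∃ l : List (Finset (Sym2 V)), (∀ s ∈ l, s ∈ 𝒞) ∧ l.foldr symmDiff ∅ = t

/-- The edge sets of the cycles of the subgraph with edge set `E` having weighted length
at most `r`. -/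
def shortCycleEdgeSets (G : SimpleGraph V) (wt : Sym2 V → ℕ) (r : ℕ∞) (E : Set (Sym2 V)) :
    Set (Finset (Sym2 V)) :=
  {t | ∃ (v : V) (c : G.Walk v v), c.IsCycle ∧ (∀ e ∈ c.edges, e ∈ E) ∧
        (wlen wt c : ℕ∞) ≤ r ∧ c.edges.toFinset = t}

/-- Every cycle of the subgraph with edge set `E` is generated (over 𝔽₂) by the cycles of
that subgraph of weighted length at most `r`. -/
def LocallyGenerated (G : SimpleGraph V) (wt : Sym2 V → ℕ) (r : ℕ∞) (E : Set (Sym2 V)) : Prop :=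
  ∀ (v : V) (c : G.Walk v v), c.IsCycle → (∀ e ∈ c.edges, e ∈ E) →
    IsF2Sum (shortCycleEdgeSets G wt r E) c.edges.toFinset

/-- A subdivision of a wheel inside the graph `G`: a center, `n ≥ 3` branch vertices on the
rim, internally disjoint spoke paths from the center to the branch vertices and internally
disjoint rim arcs joining consecutive branch vertices. -/
structure WheelSubdiv (G : SimpleGraph V) where
  n : ℕ
  hn : 3 ≤ n
  center : V
  branch : Fin n → V
  branch_inj : Function.Injective branch
  center_ne : ∀ i, center ≠ branch i
  spoke : (i : Fin n) → G.Walk center (branch i)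
  arc : (i : Fin n) → G.Walk (branch i) (branch (finRotate n i))
  spoke_path : ∀ i, (spoke i).IsPath
  arc_path : ∀ i, (arc i).IsPath
  spoke_spoke : ∀ i j, i ≠ j →
    {x | x ∈ (spoke i).support} ∩ {x | x ∈ (spoke j).support} = {center}
  arc_arc : ∀ i j, i ≠ j →
    {x | x ∈ (arc i).support} ∩ {x | x ∈ (arc j).support} =
      ({branch i, branch (finRotate n i)} ∩ {branch j, branch (finRotate n j)} : Set V)
  spoke_arc : ∀ i j,
    {x | x ∈ (spoke i).support} ∩ {x | x ∈ (arc j).support} =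
      ({center, branch i} ∩ {branch j, branch (finRotate n j)} : Set V)

namespace WheelSubdiv

variable {G : SimpleGraph V}

/-- The vertices of the subdivision of the wheel. -/
def support (W : WheelSubdiv G) : Set V :=
  {x | ∃ i, x ∈ (W.spoke i).support ∨ x ∈ (W.arc i).support}

/-- The edges of the subdivision of the wheel. -/
def edges (W : WheelSubdiv G) : Set (Sym2 V) :=
  {e | ∃ i, e ∈ (W.spoke i).edges ∨ e ∈ (W.arc i).edges}

/-- The `i`-th piece of the subdivision of the wheel: the cycle through the center obtained
from the `i`-th spoke, the `i`-th rim arc and the `(i+1)`-st spoke. -/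
def piece (W : WheelSubdiv G) (i : Fin W.n) : G.Walk W.center W.center :=
  (W.spoke i).append ((W.arc i).append (W.spoke (finRotate W.n i)).reverse)

/-- The weighted length of the `i`-th piece. -/
def pieceLen (W : WheelSubdiv G) (wt : Sym2 V → ℕ) (i : Fin W.n) : ℕ :=
  wlen wt (W.piece i)

/-- The weighted length of the rim. -/
def rimLen (W : WheelSubdiv G) (wt : Sym2 V → ℕ) : ℕ :=
  ∑ i, wlen wt (W.arc i)

/-- The subdivision of the wheel is `r`-bounded: all pieces have length at most `r`. -/
def RBounded (W : WheelSubdiv G) (wt : Sym2 V → ℕ) (r : ℕ∞) : Prop :=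
  ∀ i, (W.pieceLen wt i : ℕ∞) ≤ r

/-- The subdivision of the wheel has an `r`-explicit generating set: all pieces have
length at most `r`, or all pieces except one have length at most `r` and the rim has
length at most `r`. -/
def RExplicit (W : WheelSubdiv G) (wt : Sym2 V → ℕ) (r : ℕ∞) : Prop :=
  (∀ i, (W.pieceLen wt i : ℕ∞) ≤ r) ∨
    ((∃ i₀, ∀ i, i ≠ i₀ → (W.pieceLen wt i : ℕ∞) ≤ r) ∧ (W.rimLen wt : ℕ∞) ≤ r)

/-- The subdivision of the wheel is `r`-local: its cycles of length at most `r` generate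
all its cycles. -/
def RLocal (W : WheelSubdiv G) (wt : Sym2 V → ℕ) (r : ℕ∞) : Prop :=
  LocallyGenerated G wt r W.edges

end WheelSubdiv

/-- A theta graph of parameter `r` inside `G`: two branching vertices joined by three
internally disjoint paths (its arms) such that at least two of the three cycles formed by
unions of pairs of arms have weighted length at most `r`. -/
structure Theta (G : SimpleGraph V) (wt : Sym2 V → ℕ) (r : ℕ∞) where
  v : V
  w : V
  hvw : v ≠ w
  arm : Fin 3 → G.Walk v w
  arm_path : ∀ i, (arm i).IsPath
  arm_inter : ∀ i j, i ≠ j →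
    {x | x ∈ (arm i).support} ∩ {x | x ∈ (arm j).support} = {v, w}
  arm_ne : ∀ i j, i ≠ j → (arm i).edges ≠ (arm j).edges
  param : ∃ i j k : Fin 3, i ≠ j ∧ i ≠ k ∧ j ≠ k ∧
    ((wlen wt (arm i) + wlen wt (arm j) : ℕ) : ℕ∞) ≤ r ∧
    ((wlen wt (arm i) + wlen wt (arm k) : ℕ) : ℕ∞) ≤ r

namespace Theta

variable {G : SimpleGraph V} {wt : Sym2 V → ℕ} {r : ℕ∞}

/-- The vertices of the theta graph. -/
def support (θ : Theta G wt r) : Set V := {x | ∃ i, x ∈ (θ.arm i).support}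

/-- The edges of the theta graph. -/
def edges (θ : Theta G wt r) : Set (Sym2 V) := {e | ∃ i, e ∈ (θ.arm i).edges}

/-- `x` is an interior vertex of the `i`-th arm. -/
def interior (θ : Theta G wt r) (i : Fin 3) (x : V) : Prop :=
  x ∈ (θ.arm i).support ∧ x ≠ θ.v ∧ x ≠ θ.w

/-- `x` is a branching vertex of the theta graph. -/
def IsBranch (θ : Theta G wt r) (x : V) : Prop := x = θ.v ∨ x = θ.w

end Theta

/-- `p` lies strictly between `x` and `y` on the path `A`. -/
def StrictlyBetween {G : SimpleGraph V} {u₀ w₀ : V} (A : G.Walk u₀ w₀) (p x y : V)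
    (hp : p ∈ A.support) : Prop :=
  p ≠ x ∧ p ≠ y ∧
    ((x ∈ (A.takeUntil p hp).support ∧ y ∈ (A.dropUntil p hp).support) ∨
     (y ∈ (A.takeUntil p hp).support ∧ x ∈ (A.dropUntil p hp).support))

/-- The subgraph of `G` with vertex set `S` and edge set `E` belongs to the class `𝒲`:
it is obtained from a theta graph of parameter `r` by attaching a path `P` at interior
vertices of two different arms, in such a way that it contains a cycle of length at most
`r` including `P`. -/
def InW (G : SimpleGraph V) (wt : Sym2 V → ℕ) (r : ℕ∞) (S : Set V) (E : Set (Sym2 V)) :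
    Prop :=
  ∃ (θ : Theta G wt r) (i j : Fin 3) (p₁ p₂ : V) (P : G.Walk p₁ p₂),
    i ≠ j ∧ θ.interior i p₁ ∧ θ.interior j p₂ ∧ P.IsPath ∧
    {x | x ∈ P.support} ∩ θ.support = {p₁, p₂} ∧
    S = θ.support ∪ {x | x ∈ P.support} ∧
    E = θ.edges ∪ {e | e ∈ P.edges} ∧
    ∃ (u : V) (c : G.Walk u u), c.IsCycle ∧ (∀ e ∈ c.edges, e ∈ E) ∧
      ((wlen wt c : ℕ) : ℕ∞) ≤ r ∧ ∀ e ∈ P.edges, e ∈ c.edges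

/-- The subgraph of `G` with vertex set `S` and edge set `E` belongs to the class `𝒲*`:
it is obtained from a theta graph of parameter `r` by attaching a path `P` at interior
vertices of two different arms and a path `Q` at a branching vertex and an interior vertex
of an arm that also contains an endvertex of `P`, that endvertex of `P` lying strictly
between the two endvertices of `Q` on that arm, in such a way that it contains a cycle of
length at most `r` including both `P` and `Q`. -/
def InWStar (G : SimpleGraph V) (wt : Sym2 V → ℕ) (r : ℕ∞) (S : Set V) (E : Set (Sym2 V)) :
    Prop :=
  ∃ (θ : Theta G wt r) (i j : Fin 3) (p₁ p₂ : V) (P : G.Walk p₁ p₂),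
    i ≠ j ∧ θ.interior i p₁ ∧ θ.interior j p₂ ∧ P.IsPath ∧
    {x | x ∈ P.support} ∩ θ.support = {p₁, p₂} ∧
    ∃ (b q : V) (k : Fin 3) (Q : G.Walk b q),
      θ.IsBranch b ∧ θ.interior k q ∧ Q.IsPath ∧
      {x | x ∈ Q.support} ∩ (θ.support ∪ {x | x ∈ P.support}) = {b, q} ∧
      (∃ (p : V) (hp : p ∈ (θ.arm k).support), (p = p₁ ∨ p = p₂) ∧
        StrictlyBetween (θ.arm k) p b q hp) ∧
      S = θ.support ∪ {x | x ∈ P.support} ∪ {x | x ∈ Q.support} ∧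
      E = θ.edges ∪ {e | e ∈ P.edges} ∪ {e | e ∈ Q.edges} ∧
      ∃ (u : V) (c : G.Walk u u), c.IsCycle ∧ (∀ e ∈ c.edges, e ∈ E) ∧
        ((wlen wt c : ℕ) : ℕ∞) ≤ r ∧ (∀ e ∈ P.edges, e ∈ c.edges) ∧
        ∀ e ∈ Q.edges, e ∈ c.edges

/-- `Q` is a subpath of the cycle `o`: a path all of whose edges are edges of `o`. -/
def IsSubpathOf {G : SimpleGraph V} {a b u : V} (Q : G.Walk a b) (o : G.Walk u u) : Prop :=
  Q.IsPath ∧ ∀ e ∈ Q.edges, e ∈ o.edges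

namespace Theta

variable {G : SimpleGraph V} {wt : Sym2 V → ℕ} {r : ℕ∞}

/-- `Q` is an arc of the cycle `o` relative to the theta graph `θ`: a nontrivial subpath
of `o` meeting `θ` exactly in its two endvertices. -/
def IsArc (θ : Theta G wt r) {u a b : V} (o : G.Walk u u) (Q : G.Walk a b) : Prop :=
  IsSubpathOf Q o ∧ 0 < Q.length ∧ a ∈ θ.support ∧ b ∈ θ.support ∧
    ∀ x ∈ Q.support, x ≠ a → x ≠ b → x ∉ θ.support

/-- `Q` is a `θ`-bridge of `o`: an arc whose endvertices are interior vertices of two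
different arms of `θ`. -/
def IsBridgeArc (θ : Theta G wt r) {u a b : V} (o : G.Walk u u) (Q : G.Walk a b) : Prop :=
  θ.IsArc o Q ∧ ∃ i j : Fin 3, i ≠ j ∧ θ.interior i a ∧ θ.interior j b

/-- `Q` is a `θ`-detour of `o`: an arc that is not a bridge. -/
def IsDetourArc (θ : Theta G wt r) {u a b : V} (o : G.Walk u u) (Q : G.Walk a b) : Prop :=
  θ.IsArc o Q ∧ ¬ ∃ i j : Fin 3, i ≠ j ∧ θ.interior i a ∧ θ.interior j b

/-- The arc `R` is strongly adjacent to the arc `S`: some subpath `X` of `o` joins an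
endvertex of `R` to an endvertex of `S`, contains no internal vertex of any arc, and the
endvertex of `R` on `X` is not a branching vertex of `θ`. -/
def StronglyAdj (θ : Theta G wt r) {u r₁ r₂ s₁ s₂ : V} (o : G.Walk u u)
    (R : G.Walk r₁ r₂) (S : G.Walk s₁ s₂) : Prop :=
  ∃ (x y : V) (X : G.Walk x y), (x = r₁ ∨ x = r₂) ∧ (y = s₁ ∨ y = s₂) ∧
    IsSubpathOf X o ∧
    (∀ z ∈ X.support, ∀ (a b : V) (Q : G.Walk a b), θ.IsArc o Q → z ∈ Q.support →
      z = a ∨ z = b) ∧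
    ¬ θ.IsBranch x ∧ R.length = R.length ∧ S.length = S.length

/-- The bridge `Q` is primary (relative to the branching vertex `vb` on `o`): it has an
endvertex `x` such that a shortest path from `x` to `vb` within the cycle `o` includes `Q`. -/
def PrimaryBridge (θ : Theta G wt r) {u a b : V} (o : G.Walk u u) (vb : V)
    (Q : G.Walk a b) : Prop :=
  ∃ x : V, (x = a ∨ x = b) ∧ ∃ S : G.Walk x vb, IsSubpathOf S o ∧
    (∀ S' : G.Walk x vb, IsSubpathOf S' o → wlen wt S ≤ wlen wt S') ∧
    ∀ e ∈ Q.edges, e ∈ S.edges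

end Theta

/-- Common data of fans and pre-fans of parameter `r` centered at `v`: a nonempty sequence
of (oriented) cycles through `v`, each of weighted length at most `r`. -/
structure FanSeq (G : SimpleGraph V) (wt : Sym2 V → ℕ) (r : ℕ∞) (v : V) where
  n : ℕ
  hn : 0 < n
  piece : Fin n → G.Walk v v
  piece_cycle : ∀ i, (piece i).IsCycle
  piece_len : ∀ i, (wlen wt (piece i) : ℕ∞) ≤ r

namespace FanSeq

variable {G : SimpleGraph V} {wt : Sym2 V → ℕ} {r : ℕ∞} {v : V}

/-- The index of the first piece. -/
def first (F : FanSeq G wt r v) : Fin F.n := ⟨0, F.hn⟩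

/-- The index of the last piece. -/
def last (F : FanSeq G wt r v) : Fin F.n := ⟨F.n - 1, Nat.sub_lt F.hn Nat.one_pos⟩

/-- The start of the pre-fan: the edge of the first cycle immediately before `v`. -/
def preStart (F : FanSeq G wt r v) : Sym2 V :=
  s((F.piece F.first).reverse.getVert 1, v)

/-- The end of the pre-fan: the edge of the last cycle immediately after `v`. -/
def preEnd (F : FanSeq G wt r v) : Sym2 V :=
  s(v, (F.piece F.last).getVert 1)

/-- The start of the fan: the first edge of the first cycle. -/
def fanStart (F : FanSeq G wt r v) : Sym2 V :=
  s(v, (F.piece F.first).getVert 1)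

/-- The end of the fan: the last edge of the last cycle. -/
def fanEnd (F : FanSeq G wt r v) : Sym2 V :=
  s((F.piece F.last).reverse.getVert 1, v)

/-- The edges of (the union of the pieces of) the fan. -/
def edges (F : FanSeq G wt r v) : Set (Sym2 V) := {e | ∃ i, e ∈ (F.piece i).edges}

/-- The pre-fan condition: the vertex just after `v` on a piece equals the vertex just
before `v` on the next piece. -/
def IsPreFan (F : FanSeq G wt r v) : Prop :=
  ∀ (i : ℕ) (h : i + 1 < F.n),
    (F.piece ⟨i, Nat.lt_of_succ_lt h⟩).getVert 1 =
      (F.piece ⟨i + 1, h⟩).reverse.getVert 1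

/-- The fan condition: pieces at distance at least two meet exactly in `v`, and each piece
has the form `v Lᵢ Mᵢ Rᵢ v` where `Rᵢ = L_{i+1}` is exactly the intersection of consecutive
pieces. -/
def IsFan (F : FanSeq G wt r v) : Prop :=
  (∀ i j : Fin F.n, 2 ≤ |((i : ℕ) : ℤ) - ((j : ℕ) : ℤ)| →
      {x | x ∈ (F.piece i).support} ∩ {x | x ∈ (F.piece j).support} = {v}) ∧
  ∀ (i : ℕ) (h : i + 1 < F.n),
    ∃ (x : V) (hx : x ∈ (F.piece ⟨i, Nat.lt_of_succ_lt h⟩).support)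
      (hx' : x ∈ (F.piece ⟨i + 1, h⟩).support),
      (F.piece ⟨i, Nat.lt_of_succ_lt h⟩).dropUntil x hx =
        ((F.piece ⟨i + 1, h⟩).takeUntil x hx').reverse ∧
      {y | y ∈ (F.piece ⟨i, Nat.lt_of_succ_lt h⟩).support} ∩
          {y | y ∈ (F.piece ⟨i + 1, h⟩).support} =
        {y | y ∈ ((F.piece ⟨i, Nat.lt_of_succ_lt h⟩).dropUntil x hx).support}

end FanSeq

end LocalWheels

/-!
If every piece of `W` is short there is nothing to do. Otherwise all pieces but one are short,
and so is the rim; since `W` has at least three spokes, some branch vertex `v` avoids the long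
piece. The spoke and the two rim arcs at `v` are internally disjoint paths from `v` to the
center and to the two neighbours of `v` on the rim; together with the spokes at these
neighbours and the rest of the rim they form a subdivision of a wheel with three spokes
centred at `v`. Its pieces are the two pieces of `W` through `v`, which are short, and the rim
of `W`.
-/

namespace LocalWheels

open SimpleGraph Fin.NatCast

section Walks

variable {V : Type*} {G : SimpleGraph V}

def MeetOnlyAtEnds {a b c d : V} (p : G.Walk a b) (q : G.Walk c d) : Prop :=
  ∀ x ∈ p.support, x ∈ q.support → (x = a ∨ x = b) ∧ (x = c ∨ x = d)

variable {a b c d a' b' : V} {p : G.Walk a b} {q : G.Walk c d}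

theorem MeetOnlyAtEnds.symm (h : MeetOnlyAtEnds p q) : MeetOnlyAtEnds q p :=
  fun x hq hp => (h x hp hq).symm

theorem MeetOnlyAtEnds.reverse_left (h : MeetOnlyAtEnds p q) : MeetOnlyAtEnds p.reverse q := by
  intro x hp hq
  rw [Walk.support_reverse, List.mem_reverse] at hp
  exact (h x hp hq).imp_left Or.symm

theorem MeetOnlyAtEnds.reverse_right (h : MeetOnlyAtEnds p q) : MeetOnlyAtEnds p q.reverse :=
  h.symm.reverse_left.symm

theorem MeetOnlyAtEnds.copy {c' d' : V} (h : MeetOnlyAtEnds p q) (ha : a = a') (hb : b = b')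
    (hc : c = c') (hd : d = d') : MeetOnlyAtEnds (p.copy ha hb) (q.copy hc hd) := by
  subst ha hb hc hd; exact h

theorem MeetOnlyAtEnds.inter_eq (h : MeetOnlyAtEnds p q) :
    {x | x ∈ p.support} ∩ {x | x ∈ q.support} = ({a, b} ∩ {c, d} : Set V) := by
  ext x
  refine ⟨fun ⟨hp, hq⟩ => h x hp hq, ?_⟩
  rintro ⟨hab, hcd⟩
  constructor
  · rcases hab with rfl | rfl
    exacts [p.start_mem_support, p.end_mem_support]
  · rcases hcd with rfl | rfl
    exacts [q.start_mem_support, q.end_mem_support]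

theorem MeetOnlyAtEnds.inter_eq_singleton {q : G.Walk a d} (h : MeetOnlyAtEnds p q)
    (hbd : b ≠ d) : {x | x ∈ p.support} ∩ {x | x ∈ q.support} = {a} := by
  rw [h.inter_eq]
  ext x
  simp only [Set.mem_inter_iff, Set.mem_insert_iff, Set.mem_singleton_iff]
  constructor
  · rintro ⟨h1 | h1, h2 | h2⟩
    exacts [h1, h1, h2, absurd (h1.symm.trans h2) hbd]
  · rintro rfl
    exact ⟨Or.inl rfl, Or.inl rfl⟩

theorem _root_.SimpleGraph.Walk.IsPath.append_of_meet {q : G.Walk b c} (hp : p.IsPath)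
    (hq : q.IsPath) (h : ∀ x ∈ p.support, x ∈ q.support → x = b) : (p.append q).IsPath := by
  rw [Walk.isPath_def, Walk.support_append, List.nodup_append]
  have hq' := hq.support_nodup
  rw [← q.cons_tail_support, List.nodup_cons] at hq'
  refine ⟨hp.support_nodup, hq'.2, fun x hx y hy hxy => ?_⟩
  subst hxy
  have hxb := h x hx (q.cons_tail_support ▸ List.mem_cons_of_mem _ hy)
  exact hq'.1 (hxb ▸ hy)

end Walks

section WeightedLength

variable {V : Type*} {G : SimpleGraph V} (wt : Sym2 V → ℕ)

@[simp]
theorem wlen_append {u v w : V} (p : G.Walk u v) (q : G.Walk v w) :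
    wlen wt (p.append q) = wlen wt p + wlen wt q := by
  simp [wlen, Walk.edges_append]

@[simp]
theorem wlen_reverse {u v : V} (p : G.Walk u v) : wlen wt p.reverse = wlen wt p := by
  simp [wlen, Walk.edges_reverse, List.sum_reverse]

@[simp]
theorem wlen_copy {u v u' v' : V} (p : G.Walk u v) (hu : u = u') (hv : v = v') :
    wlen wt (p.copy hu hv) = wlen wt p := by
  subst hu hv; rfl

theorem wlen_congr {ι : Type*} {u v : ι → V} (p : (i : ι) → G.Walk (u i) (v i)) {i j : ι}
    (h : i = j) : wlen wt (p i) = wlen wt (p j) := by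
  subst h; rfl

end WeightedLength

theorem add_natCast_eq_add_natCast_iff {n : ℕ} [NeZero n] (k : Fin n) {s t : ℕ} (hs : s ≤ n)
    (ht : t ≤ n) : k + (s : Fin n) = k + t ↔ s = t ∨ s = 0 ∧ t = n ∨ s = n ∧ t = 0 := by
  have hval : ∀ u ≤ n, ((u : Fin n) : ℕ) = if u = n then 0 else u := fun u hu => by
    split_ifs with h
    · subst h; simp
    · simp [Nat.mod_eq_of_lt (lt_of_le_of_ne hu h)]
  rw [add_right_inj, Fin.ext_iff, hval s hs, hval t ht]
  split_ifs <;> omega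

namespace WheelSubdiv

variable {V : Type*} {G : SimpleGraph V} (W : WheelSubdiv G)

instance instNeZeroN : NeZero W.n := ⟨by have := W.hn; omega⟩

theorem meetOnlyAtEnds_spoke_spoke {i j : Fin W.n} (hij : i ≠ j) :
    MeetOnlyAtEnds (W.spoke i) (W.spoke j) := by
  intro _ hi hj
  have hx := (W.spoke_spoke i j hij).subset ⟨hi, hj⟩
  exact ⟨Or.inl hx, Or.inl hx⟩

theorem meetOnlyAtEnds_spoke_arc (i j : Fin W.n) : MeetOnlyAtEnds (W.spoke i) (W.arc j) :=
  fun _ hi hj => (W.spoke_arc i j).subset ⟨hi, hj⟩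

theorem meetOnlyAtEnds_arc_arc {i j : Fin W.n} (hij : i ≠ j) :
    MeetOnlyAtEnds (W.arc i) (W.arc j) :=
  fun _ hi hj => (W.arc_arc i j hij).subset ⟨hi, hj⟩

theorem add_one_ne_self (i : Fin W.n) : i + 1 ≠ i := fun h => by
  have h3 := W.hn
  have := (add_natCast_eq_add_natCast_iff i (s := 1) (t := 0) (by omega) (by omega)).1
    (by simpa using h)
  omega

theorem add_one_add_one_ne_self (i : Fin W.n) : i + 1 + 1 ≠ i := fun h => by
  have h3 := W.hn
  have := (add_natCast_eq_add_natCast_iff i (s := 2) (t := 0) (by omega) (by omega)).1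
    (by simpa [add_assoc, one_add_one_eq_two] using h)
  omega

section Offsets

variable (k : Fin W.n)

/-- Offsets `t : ℕ` from a base index `k` are read modulo `W.n` (so `branchFrom k W.n` is
`branchFrom k 0`); a run of consecutive rim arcs is then indexed by an interval of naturals. -/
abbrev branchFrom (t : ℕ) : V := W.branch (k + t)

def arcFrom (t : ℕ) : G.Walk (W.branchFrom k t) (W.branchFrom k (t + 1)) :=
  (W.arc (k + t)).copy rfl (by rw [finRotate_apply, branchFrom, Nat.cast_succ, add_assoc])

theorem branchFrom_eq_branchFrom_iff {s t : ℕ} (hs : s ≤ W.n) (ht : t ≤ W.n) :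
    W.branchFrom k s = W.branchFrom k t ↔ s = t ∨ s = 0 ∧ t = W.n ∨ s = W.n ∧ t = 0 :=
  W.branch_inj.eq_iff.trans (add_natCast_eq_add_natCast_iff k hs ht)

theorem center_ne_branchFrom (t : ℕ) : W.center ≠ W.branchFrom k t := W.center_ne _

@[simp]
theorem edges_arcFrom (t : ℕ) : (W.arcFrom k t).edges = (W.arc (k + t)).edges := by
  rw [arcFrom, Walk.edges_copy]

theorem meetOnlyAtEnds_spoke_arcFrom (s t : ℕ) :
    MeetOnlyAtEnds (W.spoke (k + s)) (W.arcFrom k t) :=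
  (W.meetOnlyAtEnds_spoke_arc _ _).copy rfl rfl rfl _

theorem meetOnlyAtEnds_spoke_spoke_of_ne {s t : ℕ} (hs : s < W.n) (ht : t < W.n) (hst : s ≠ t) :
    MeetOnlyAtEnds (W.spoke (k + s)) (W.spoke (k + t)) :=
  W.meetOnlyAtEnds_spoke_spoke fun h => by
    rw [add_natCast_eq_add_natCast_iff k hs.le ht.le] at h; omega

theorem meetOnlyAtEnds_arcFrom_arcFrom {s t : ℕ} (hs : s < W.n) (ht : t < W.n) (hst : s ≠ t) :
    MeetOnlyAtEnds (W.arcFrom k s) (W.arcFrom k t) := by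
  refine (W.meetOnlyAtEnds_arc_arc fun h => ?_).copy rfl _ rfl _
  rw [add_natCast_eq_add_natCast_iff k hs.le ht.le] at h; omega

theorem isPath_arcFrom (t : ℕ) : (W.arcFrom k t).IsPath := by
  simpa [arcFrom] using W.arc_path _

def rimPath (s : ℕ) : (m : ℕ) → G.Walk (W.branchFrom k s) (W.branchFrom k (s + m))
  | 0 => Walk.nil
  | m + 1 => (rimPath s m).append (W.arcFrom k (s + m))

theorem mem_support_rimPath {s m : ℕ} {x : V} :
    x ∈ (W.rimPath k s m).support ↔
      x = W.branchFrom k s ∨ ∃ t < m, x ∈ (W.arcFrom k (s + t)).support := by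
  induction m with
  | zero => simp [rimPath]
  | succ m ih =>
    rw [rimPath, Walk.mem_support_append_iff, ih, Nat.exists_lt_succ_right, or_assoc]

theorem mem_edges_rimPath {s m : ℕ} {e : Sym2 V} :
    e ∈ (W.rimPath k s m).edges ↔ ∃ t < m, e ∈ (W.arcFrom k (s + t)).edges := by
  induction m with
  | zero => simp [rimPath]
  | succ m ih => rw [rimPath, Walk.edges_append, List.mem_append, ih, Nat.exists_lt_succ_right]

theorem wlen_rimPath (wt : Sym2 V → ℕ) (s m : ℕ) :
    wlen wt (W.rimPath k s m) = ∑ t ∈ Finset.range m, wlen wt (W.arcFrom k (s + t)) := by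
  induction m with
  | zero => rfl
  | succ m ih => rw [rimPath, wlen_append, ih, Finset.sum_range_succ]

theorem meetOnlyAtEnds_rimPath {a b : V} {p : G.Walk a b} {s m : ℕ} (hm : 0 < m)
    (hp : ∀ t < m, MeetOnlyAtEnds p (W.arcFrom k (s + t)))
    (hends : ∀ t, 0 < t → t < m →
      W.branchFrom k (s + t) ≠ a ∧ W.branchFrom k (s + t) ≠ b) :
    MeetOnlyAtEnds p (W.rimPath k s m) := by
  intro x hxp hxR
  rcases (W.mem_support_rimPath k).1 hxR with rfl | ⟨t, ht, hxt⟩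
  · exact ⟨(hp 0 hm _ hxp (W.arcFrom k (s + 0)).start_mem_support).1, Or.inl rfl⟩
  obtain ⟨hab, hx⟩ := hp t ht x hxp hxt
  have inner : ∀ u, 0 < u → u < m → x ≠ W.branchFrom k (s + u) := by
    rintro u hu hum rfl
    rcases hab with h | h
    exacts [(hends u hu hum).1 h, (hends u hu hum).2 h]
  refine ⟨hab, ?_⟩
  rcases hx with rfl | rfl
  · rcases Nat.eq_zero_or_pos t with rfl | ht0
    · exact Or.inl rfl
    · exact absurd rfl (inner t ht0 ht)
  · rcases lt_or_eq_of_le (Nat.succ_le_of_lt ht) with htm | htm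
    · exact absurd rfl (inner (t + 1) t.succ_pos htm)
    · exact Or.inr (by rw [← htm]; rfl)

theorem isPath_rimPath {s m : ℕ} (hs : 0 < s) (hsm : s + m ≤ W.n) :
    (W.rimPath k s m).IsPath := by
  induction m with
  | zero => exact Walk.IsPath.nil
  | succ m ih =>
    refine (ih (by omega)).append_of_meet (W.isPath_arcFrom k _) fun x hxR hxa => ?_
    have of_mem_arc : ∀ t < m, x ∈ (W.arcFrom k (s + t)).support →
        x = W.branchFrom k (s + m) := by
      intro t ht hxt
      obtain ⟨hx₁, hx₂ | hx₂⟩ := W.meetOnlyAtEnds_arcFrom_arcFrom k (s := s + t)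
        (t := s + m) (by omega) (by omega) (by omega) x hxt hxa
      · exact hx₂
      · rcases hx₁ with hx₁ | hx₁ <;>
          have := (W.branchFrom_eq_branchFrom_iff k (by omega) (by omega)).1
            (hx₁.symm.trans hx₂) <;> omega
    rcases (W.mem_support_rimPath k).1 hxR with rfl | ⟨t, ht, hxt⟩
    · rcases Nat.eq_zero_or_pos m with rfl | hm
      · rfl
      · exact of_mem_arc 0 hm (W.arcFrom k (s + 0)).start_mem_support
    · exact of_mem_arc t ht hxt

theorem meetOnlyAtEnds_spoke_rimPath {t s m : ℕ} (hts : t ≤ s) (hm : 0 < m)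
    (hsm : s + m ≤ W.n) : MeetOnlyAtEnds (W.spoke (k + t)) (W.rimPath k s m) :=
  W.meetOnlyAtEnds_rimPath k hm (fun u _ => W.meetOnlyAtEnds_spoke_arcFrom k t (s + u))
    fun u hu hum => ⟨(W.center_ne_branchFrom k _).symm, fun h => by
      have := (W.branchFrom_eq_branchFrom_iff k (by omega) (by omega)).1 h; omega⟩

theorem meetOnlyAtEnds_arcFrom_rimPath {t s m : ℕ} (hts : t < s) (hm : 0 < m)
    (hsm : s + m ≤ W.n) : MeetOnlyAtEnds (W.arcFrom k t) (W.rimPath k s m) :=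
  W.meetOnlyAtEnds_rimPath k hm
    (fun u hu => W.meetOnlyAtEnds_arcFrom_arcFrom k (by omega) (by omega) (by omega))
    fun u hu hum => ⟨fun h => by
      have := (W.branchFrom_eq_branchFrom_iff k (by omega) (by omega)).1 h; omega, fun h => by
      have := (W.branchFrom_eq_branchFrom_iff k (by omega) (by omega)).1 h; omega⟩

theorem branchFrom_ne_branchFrom {s t : ℕ} (hs : s < W.n) (ht : t < W.n) (hst : s ≠ t) :
    W.branchFrom k s ≠ W.branchFrom k t := fun h => by
  have := (W.branchFrom_eq_branchFrom_iff k hs.le ht.le).1 h; omega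

theorem branchFrom_two_add_sub_two : W.branchFrom k (2 + (W.n - 2)) = W.branchFrom k 0 :=
  (W.branchFrom_eq_branchFrom_iff k (by have := W.hn; omega) (Nat.zero_le _)).2
    (by have := W.hn; omega)

def recenterBranch : Fin 3 → V := ![W.branchFrom k 0, W.center, W.branchFrom k 2]

def recenterSpoke : (i : Fin 3) → G.Walk (W.branchFrom k 1) (W.recenterBranch k i)
  | ⟨0, _⟩ => (W.arcFrom k 0).reverse
  | ⟨1, _⟩ => (W.spoke (k + (1 : ℕ))).reverse
  | ⟨2, _⟩ => W.arcFrom k 1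

def recenterArc :
    (i : Fin 3) → G.Walk (W.recenterBranch k i) (W.recenterBranch k (finRotate 3 i))
  | ⟨0, _⟩ => (W.spoke (k + (0 : ℕ))).reverse
  | ⟨1, _⟩ => W.spoke (k + (2 : ℕ))
  | ⟨2, _⟩ => (W.rimPath k 2 (W.n - 2)).copy rfl (W.branchFrom_two_add_sub_two k)

theorem recenterBranch_injective : Function.Injective (W.recenterBranch k) := by
  have h3 := W.hn
  have h02 := W.branchFrom_ne_branchFrom k (s := 0) (t := 2) (by omega) (by omega) (by omega)
  have h0 := W.center_ne_branchFrom k 0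
  have h2 := W.center_ne_branchFrom k 2
  simp [recenterBranch, Function.Injective, Fin.forall_fin_succ, h02, h02.symm, h0, h0.symm, h2,
    h2.symm]

theorem branchFrom_one_ne_recenterBranch (i : Fin 3) :
    W.branchFrom k 1 ≠ W.recenterBranch k i := by
  have h3 := W.hn
  fin_cases i
  exacts [W.branchFrom_ne_branchFrom k (s := 1) (t := 0) (by omega) (by omega) (by omega),
    (W.center_ne_branchFrom k 1).symm,
    W.branchFrom_ne_branchFrom k (s := 1) (t := 2) (by omega) (by omega) (by omega)]

theorem isPath_recenterSpoke (i : Fin 3) : (W.recenterSpoke k i).IsPath := by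
  fin_cases i
  exacts [(W.isPath_arcFrom k 0).reverse, (W.spoke_path _).reverse, W.isPath_arcFrom k 1]

theorem isPath_recenterArc (i : Fin 3) : (W.recenterArc k i).IsPath := by
  have h3 := W.hn
  fin_cases i
  exacts [(W.spoke_path _).reverse, W.spoke_path _,
    (Walk.isPath_copy _ rfl _).2 (W.isPath_rimPath k (s := 2) (m := W.n - 2) (by omega) (by omega))]

theorem meetOnlyAtEnds_recenterSpoke_recenterSpoke {i j : Fin 3} (hij : i ≠ j) :
    MeetOnlyAtEnds (W.recenterSpoke k i) (W.recenterSpoke k j) := by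
  have h3 := W.hn
  have h01 : MeetOnlyAtEnds (W.recenterSpoke k 0) (W.recenterSpoke k 1) :=
    (W.meetOnlyAtEnds_spoke_arcFrom k 1 0).symm.reverse_left.reverse_right
  have h02 : MeetOnlyAtEnds (W.recenterSpoke k 0) (W.recenterSpoke k 2) :=
    (W.meetOnlyAtEnds_arcFrom_arcFrom k (s := 0) (t := 1) (by omega) (by omega)
      (by omega)).reverse_left
  have h12 : MeetOnlyAtEnds (W.recenterSpoke k 1) (W.recenterSpoke k 2) :=
    (W.meetOnlyAtEnds_spoke_arcFrom k 1 1).reverse_left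
  fin_cases i <;> fin_cases j
  all_goals first
    | exact absurd rfl hij
    | exact h01 | exact h01.symm | exact h02 | exact h02.symm | exact h12 | exact h12.symm

theorem meetOnlyAtEnds_recenterArc_recenterArc {i j : Fin 3} (hij : i ≠ j) :
    MeetOnlyAtEnds (W.recenterArc k i) (W.recenterArc k j) := by
  have h3 := W.hn
  have h01 : MeetOnlyAtEnds (W.recenterArc k 0) (W.recenterArc k 1) :=
    (W.meetOnlyAtEnds_spoke_spoke_of_ne k (s := 0) (t := 2) (by omega) (by omega)
      (by omega)).reverse_left
  have h02 : MeetOnlyAtEnds (W.recenterArc k 0) (W.recenterArc k 2) :=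
    ((W.meetOnlyAtEnds_spoke_rimPath k (t := 0) (by omega) (by omega)
      (by omega)).copy rfl rfl rfl _).reverse_left
  have h12 : MeetOnlyAtEnds (W.recenterArc k 1) (W.recenterArc k 2) :=
    (W.meetOnlyAtEnds_spoke_rimPath k (t := 2) (by omega) (by omega) (by omega)).copy rfl rfl rfl _
  fin_cases i <;> fin_cases j
  all_goals first
    | exact absurd rfl hij
    | exact h01 | exact h01.symm | exact h02 | exact h02.symm | exact h12 | exact h12.symm

theorem meetOnlyAtEnds_recenterSpoke_recenterArc (i j : Fin 3) :
    MeetOnlyAtEnds (W.recenterSpoke k i) (W.recenterArc k j) := by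
  have h3 := W.hn
  fin_cases i <;> fin_cases j
  · exact (W.meetOnlyAtEnds_spoke_arcFrom k 0 0).symm.reverse_left.reverse_right
  · exact (W.meetOnlyAtEnds_spoke_arcFrom k 2 0).symm.reverse_left
  · exact ((W.meetOnlyAtEnds_arcFrom_rimPath k (t := 0) (by omega) (by omega)
      (by omega)).copy rfl rfl rfl _).reverse_left
  · exact (W.meetOnlyAtEnds_spoke_spoke_of_ne k (s := 1) (t := 0) (by omega) (by omega)
      (by omega)).reverse_left.reverse_right
  · exact (W.meetOnlyAtEnds_spoke_spoke_of_ne k (s := 1) (t := 2) (by omega) (by omega)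
      (by omega)).reverse_left
  · exact ((W.meetOnlyAtEnds_spoke_rimPath k (t := 1) (by omega) (by omega)
      (by omega)).copy rfl rfl rfl _).reverse_left
  · exact (W.meetOnlyAtEnds_spoke_arcFrom k 0 1).symm.reverse_right
  · exact (W.meetOnlyAtEnds_spoke_arcFrom k 2 1).symm
  · exact (W.meetOnlyAtEnds_arcFrom_rimPath k (t := 1) (by omega) (by omega)
      (by omega)).copy rfl rfl rfl _

/-- The subdivision of a wheel with three spokes centred at the branch vertex `k + 1` of `W`:
its spokes are the two arcs and the spoke of `W` at that vertex, its rim consists of the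
spokes of `W` at `k` and `k + 2` and the rest of the rim of `W`. -/
def recenter : WheelSubdiv G where
  n := 3
  hn := le_rfl
  center := W.branchFrom k 1
  branch := W.recenterBranch k
  branch_inj := W.recenterBranch_injective k
  center_ne := W.branchFrom_one_ne_recenterBranch k
  spoke := W.recenterSpoke k
  arc := W.recenterArc k
  spoke_path := W.isPath_recenterSpoke k
  arc_path := W.isPath_recenterArc k
  spoke_spoke _ _ hij := (W.meetOnlyAtEnds_recenterSpoke_recenterSpoke k hij).inter_eq_singleton
    ((W.recenterBranch_injective k).ne hij)
  arc_arc _ _ hij := (W.meetOnlyAtEnds_recenterArc_recenterArc k hij).inter_eq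
  spoke_arc i j := (W.meetOnlyAtEnds_recenterSpoke_recenterArc k i j).inter_eq

variable (wt : Sym2 V → ℕ)

theorem rimLen_eq_sum_range :
    W.rimLen wt = ∑ t ∈ Finset.range W.n, wlen wt (W.arcFrom k t) := by
  rw [rimLen, ← Equiv.sum_comp (Equiv.addLeft k)]
  simp only [wlen, edges_arcFrom]
  rw [← Fin.sum_univ_eq_sum_range (fun t => ((W.arc (k + t)).edges.map wt).sum)]
  exact Finset.sum_congr rfl fun i _ => by rw [Equiv.coe_addLeft, Fin.cast_val_eq_self]

theorem rimLen_eq_wlen_rimPath : W.rimLen wt =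
    wlen wt (W.arcFrom k 0) + wlen wt (W.arcFrom k 1) + wlen wt (W.rimPath k 2 (W.n - 2)) := by
  rw [W.rimLen_eq_sum_range k, wlen_rimPath,
    ← Finset.sum_Ico_eq_sum_range (fun t => wlen wt (W.arcFrom k t)),
    ← Finset.sum_range_add_sum_Ico _ (show 2 ≤ W.n by have := W.hn; omega)]
  simp [Finset.sum_range_succ]

theorem pieceLen_recenter_zero : (W.recenter k).pieceLen wt 0 = W.pieceLen wt k := by
  show wlen wt ((W.arcFrom k 0).reverse.append ((W.spoke (k + (0 : ℕ))).reverse.append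
    (W.spoke (k + (1 : ℕ))).reverse.reverse)) = _
  have h0 : k + ((0 : ℕ) : Fin W.n) = k := by simp
  have h1 : k + ((1 : ℕ) : Fin W.n) = finRotate W.n k := by simp [finRotate_apply]
  simp only [pieceLen, piece, arcFrom, wlen_append, wlen_reverse, wlen_copy]
  rw [wlen_congr wt W.arc h0, wlen_congr wt W.spoke h0, wlen_congr wt W.spoke h1]
  ring

theorem pieceLen_recenter_one : (W.recenter k).pieceLen wt 1 = W.pieceLen wt (k + 1) := by
  show wlen wt ((W.spoke (k + (1 : ℕ))).reverse.append ((W.spoke (k + (2 : ℕ))).append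
    (W.arcFrom k 1).reverse)) = _
  have h1 : k + ((1 : ℕ) : Fin W.n) = k + 1 := by simp
  have h2 : k + ((2 : ℕ) : Fin W.n) = finRotate W.n (k + 1) := by
    rw [finRotate_apply, add_assoc, Nat.cast_ofNat, one_add_one_eq_two]
  simp only [pieceLen, piece, arcFrom, wlen_append, wlen_reverse, wlen_copy]
  rw [wlen_congr wt W.arc h1, wlen_congr wt W.spoke h1, wlen_congr wt W.spoke h2]
  ring

theorem pieceLen_recenter_two : (W.recenter k).pieceLen wt 2 = W.rimLen wt := by
  show wlen wt ((W.arcFrom k 1).append (((W.rimPath k 2 (W.n - 2)).copy rfl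
    (W.branchFrom_two_add_sub_two k)).append (W.arcFrom k 0).reverse.reverse)) = _
  simp [W.rimLen_eq_wlen_rimPath k]
  ring

theorem edges_recenter_subset : (W.recenter k).edges ⊆ W.edges := by
  have of_spoke {e : Sym2 V} (i : Fin W.n) (h : e ∈ (W.spoke i).edges) : e ∈ W.edges :=
    ⟨i, Or.inl h⟩
  have of_arc {e : Sym2 V} (i : Fin W.n) (h : e ∈ (W.arc i).edges) : e ∈ W.edges :=
    ⟨i, Or.inr h⟩
  rintro e ⟨i, he | he⟩ <;> fin_cases i
  · have he : e ∈ (W.arcFrom k 0).reverse.edges := he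
    exact of_arc _ (by simpa using he)
  · have he : e ∈ (W.spoke (k + (1 : ℕ))).reverse.edges := he
    exact of_spoke _ (by simpa using he)
  · have he : e ∈ (W.arcFrom k 1).edges := he
    exact of_arc _ (by simpa using he)
  · have he : e ∈ (W.spoke (k + (0 : ℕ))).reverse.edges := he
    exact of_spoke _ (by simpa using he)
  · exact of_spoke _ he
  · have he : e ∈ ((W.rimPath k 2 (W.n - 2)).copy rfl
      (W.branchFrom_two_add_sub_two k)).edges := he
    rw [Walk.edges_copy] at he
    obtain ⟨t, -, ht⟩ := (W.mem_edges_rimPath k).1 he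
    exact of_arc _ (by simpa using ht)

theorem rBounded_recenter {r : ℕ∞} (h₀ : (W.pieceLen wt k : ℕ∞) ≤ r)
    (h₁ : (W.pieceLen wt (k + 1) : ℕ∞) ≤ r) (hrim : (W.rimLen wt : ℕ∞) ≤ r) :
    (W.recenter k).RBounded wt r := by
  intro i
  fin_cases i
  · exact (W.pieceLen_recenter_zero k wt).symm ▸ h₀
  · exact (W.pieceLen_recenter_one k wt).symm ▸ h₁
  · exact (W.pieceLen_recenter_two k wt).symm ▸ hrim

end Offsets

end WheelSubdiv

end LocalWheels

theorem LocalWheels.stmt2_general {V : Type*}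
    (G : SimpleGraph V) (wt : Sym2 V → ℕ) (r : ℕ∞)
    (W : LocalWheels.WheelSubdiv G) (hexp : W.RExplicit wt r) :
    ∃ W' : LocalWheels.WheelSubdiv G, W'.edges ⊆ W.edges ∧ W'.RBounded wt r := by
  rcases hexp with hall | ⟨⟨i₀, hi₀⟩, hrim⟩
  · exact ⟨W, subset_rfl, hall⟩
  · exact ⟨W.recenter (i₀ + 1), W.edges_recenter_subset _, W.rBounded_recenter _ wt
      (hi₀ _ (W.add_one_ne_self i₀)) (hi₀ _ (W.add_one_add_one_ne_self i₀)) hrim⟩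

/-- Every subdivision of a wheel with an `r`-explicit generating set
contains, as a subgraph, a subdivision of a wheel that is `r`-bounded. -/
theorem LocalWheels.stmt2 {V : Type*} [Fintype V] [DecidableEq V]
    (G : SimpleGraph V) (wt : Sym2 V → ℕ) (hw : LocalWheels.WeightPos G wt) (r : ℕ∞)
    (W : LocalWheels.WheelSubdiv G) (hexp : W.RExplicit wt r) :
    ∃ W' : LocalWheels.WheelSubdiv G, W'.edges ⊆ W.edges ∧ W'.RBounded wt r :=
  LocalWheels.stmt2_general G wt r W hexp
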